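/- arXiv:0909.1854 — 4 statements merged into one kernel-verified Lean document; each statement's English description precedes it below -/
import Mathlib

section
/- Let T_{12|34}, T_{13|24}, T_{14|23} be the three binary trees on Fin 4 whose unique nontrivial splits are {1,2}, {1,3}, {1,4} respectively, and consider the Kimura 2-parameter Fourier parameterization. Define the linear form f(q) = q_{(G,G,G,G)} + q_{(G,T,G,T)} − q_{(G,G,T,T)} − q_{(G,T,T,G)} on ℂ^{G^4}, where A=(0,0), C=(0,1), G=(1,0), T=(1,1). Then: (i) for all K2P parameters s1 on T_{12|34}, s2 on T_{14|23}, and all π ∈ ℂ, f(π·ψ_{T_{12|34}}(s1) + (1−π)·ψ_{T_{14|23}}(s2)) = 0; and (ii) there exist K2P parameters s (which may even be taken with c_e = t_e for every split e, i.e. Jukes–Cantor parameters) such that f(ψ_{T_{13|24}}(s)) ≠ 0. -/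
open scoped BigOperators

/-- The group `G = ℤ/2 × ℤ/2` used for 4-state group-based models. -/
abbrev Gp : Type := (ZMod 2) × (ZMod 2)

/-- A split (subset of the taxa `Fin n`) is nontrivial if `2 ≤ |A| ≤ n - 2`. -/
def Split.Nontriv {n : ℕ} (A : Finset (Fin n)) : Prop :=
  2 ≤ A.card ∧ A.card ≤ n - 2

/-- Two splits are compatible if one of the four mutual intersections is empty. -/
def Split.Compat {n : ℕ} (A B : Finset (Fin n)) : Prop :=
  A ∩ B = ∅ ∨ A ∩ Bᶜ = ∅ ∨ Aᶜ ∩ B = ∅ ∨ Aᶜ ∩ Bᶜ = ∅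

instance {n : ℕ} (A : Finset (Fin n)) : Decidable (Split.Nontriv A) := by
  unfold Split.Nontriv; infer_instance

instance {n : ℕ} (A B : Finset (Fin n)) : Decidable (Split.Compat A B) := by
  unfold Split.Compat; infer_instance

/-- A binary tree on the taxa `Fin n`, encoded by its set `Σ(T)` of `n - 3` pairwise
compatible nontrivial splits, no two of which are equal or complementary. -/
structure PhyloBinaryTree (n : ℕ) where
  splits : Finset (Finset (Fin n))
  card_splits : splits.card = n - 3
  nontriv : ∀ A ∈ splits, Split.Nontriv A
  compat : ∀ A ∈ splits, ∀ B ∈ splits, Split.Compat A B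
  not_compl : ∀ A ∈ splits, ∀ B ∈ splits, A ≠ B → A ≠ Bᶜ

/-- The full split set `Σ*(T)`: the nontrivial splits together with the `n` trivial splits. -/
def fullSplits {n : ℕ} (T : PhyloBinaryTree n) : Finset (Finset (Fin n)) :=
  T.splits ∪ Finset.univ.image (fun i : Fin n => ({i} : Finset (Fin n)))

/-- Two split systems agree up to complementation of individual splits. -/
def sameSplits {n : ℕ} (s t : Finset (Finset (Fin n))) : Prop :=
  ∀ A : Finset (Fin n), (A ∈ s ∨ Aᶜ ∈ s) ↔ (A ∈ t ∨ Aᶜ ∈ t)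

/-- Equality of binary trees: split sets agree up to complementation of individual splits. -/
def sameTree {n : ℕ} (T1 T2 : PhyloBinaryTree n) : Prop :=
  sameSplits T1.splits T2.splits

/-- The Jukes–Cantor Fourier parameterization of the tree `T`. -/
noncomputable def psiJC {n : ℕ} (T : PhyloBinaryTree n) (a : ↥(fullSplits T) → ℂ) :
    (Fin n → Gp) → ℂ := fun g =>
  if (∑ i, g i) = 0 then
    ∏ e : ↥(fullSplits T), (if (∑ i ∈ (e : Finset (Fin n)), g i) = 0 then 1 else a e)
  else 0

/-- The 2-tree mixture parameterization for the Jukes–Cantor model. -/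
noncomputable def psiMixJC {n : ℕ} (T1 T2 : PhyloBinaryTree n)
    (a : ↥(fullSplits T1) → ℂ) (b : ↥(fullSplits T2) → ℂ) (pi : ℂ) :
    (Fin n → Gp) → ℂ := fun g =>
  pi * psiJC T1 a g + (1 - pi) * psiJC T2 b g

/-- The factor contributed by a single split in the K2P Fourier parameterization:
`1` for group element `A = (0,0)`, `c_e` for `C = (0,1)`, `t_e` for `G = (1,0)` or `T = (1,1)`. -/
def k2pFactor (p : ℂ × ℂ) (h : Gp) : ℂ :=
  if h = ((0 : ZMod 2), (0 : ZMod 2)) then 1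
  else if h = ((0 : ZMod 2), (1 : ZMod 2)) then p.1
  else p.2

/-- The Kimura 2-parameter Fourier parameterization of the tree `T`; the parameter of
split `e` is a pair `(c_e, t_e)`. -/
noncomputable def psiK2P {n : ℕ} (T : PhyloBinaryTree n) (s : ↥(fullSplits T) → ℂ × ℂ) :
    (Fin n → Gp) → ℂ := fun g =>
  if (∑ i, g i) = 0 then
    ∏ e : ↥(fullSplits T), k2pFactor (s e) (∑ i ∈ (e : Finset (Fin n)), g i)
  else 0

/-- The 2-tree mixture parameterization for the K2P model. -/
noncomputable def psiMixK2P {n : ℕ} (T1 T2 : PhyloBinaryTree n)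
    (s1 : ↥(fullSplits T1) → ℂ × ℂ) (s2 : ↥(fullSplits T2) → ℂ × ℂ) (pi : ℂ) :
    (Fin n → Gp) → ℂ := fun g =>
  pi * psiK2P T1 s1 g + (1 - pi) * psiK2P T2 s2 g

/-- The group elements `G = (1,0)` and `T = (1,1)` of `ℤ/2 × ℤ/2`. -/
def gG : Gp := ((1 : ZMod 2), (0 : ZMod 2))
def gT : Gp := ((1 : ZMod 2), (1 : ZMod 2))

/-- The quartet tree `T_{12|34}` (taxa `1,2,3,4` identified with `0,1,2,3 : Fin 4`). -/
def T12_34 : PhyloBinaryTree 4 :=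
  ⟨{({0, 1} : Finset (Fin 4))}, by decide, by decide, by decide, by decide⟩

/-- The quartet tree `T_{13|24}`. -/
def T13_24 : PhyloBinaryTree 4 :=
  ⟨{({0, 2} : Finset (Fin 4))}, by decide, by decide, by decide, by decide⟩

/-- The quartet tree `T_{14|23}`. -/
def T14_23 : PhyloBinaryTree 4 :=
  ⟨{({0, 3} : Finset (Fin 4))}, by decide, by decide, by decide, by decide⟩

/-- The linear form `f(q) = q_{GGGG} + q_{GTGT} − q_{GGTT} − q_{GTTG}`. -/
noncomputable def linformQuartet (q : (Fin 4 → Gp) → ℂ) : ℂ :=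
  q ![gG, gG, gG, gG] + q ![gG, gT, gG, gT] - q ![gG, gG, gT, gT] - q ![gG, gT, gT, gG]

/-!
A K2P coordinate `ψ_g` only sees, for each split `e`, the class of `g_e = ∑_{i ∈ e} g_i` in
`{A}`, `{C}`, `{G, T}`. On `T_{12|34}` the patterns `GGGG, GGTT` (and `GTGT, GTTG`) give the same
class on every split, and on `T_{14|23}` so do `GGGG, GTTG` (and `GTGT, GGTT`); hence each tree's
contribution to `f` cancels, whatever the mixture weight. On `T_{13|24}` the inner split sees `A`
for `GGGG, GTGT` but `C` for `GGTT, GTTG`, so with all Jukes–Cantor parameters equal to `-1` the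
four terms of `f` each contribute `+1`.
-/

lemma k2pFactor_congr (p : ℂ × ℂ) {h₁ h₂ : Gp} (h : h₁ = h₂ ∨ (h₁.1 = 1 ∧ h₂.1 = 1)) :
    k2pFactor p h₁ = k2pFactor p h₂ := by
  rcases h with rfl | ⟨h₁, h₂⟩
  · rfl
  · simp [k2pFactor, Prod.ext_iff, h₁, h₂]

lemma psiK2P_congr {n : ℕ} (T : PhyloBinaryTree n) (s : ↥(fullSplits T) → ℂ × ℂ)
    {g₁ g₂ : Fin n → Gp} (hg₁ : ∑ i, g₁ i = 0) (hg₂ : ∑ i, g₂ i = 0)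
    (h : ∀ e : ↥(fullSplits T),
      ∑ i ∈ (e : Finset (Fin n)), g₁ i = ∑ i ∈ (e : Finset (Fin n)), g₂ i ∨
        ((∑ i ∈ (e : Finset (Fin n)), g₁ i).1 = 1 ∧ (∑ i ∈ (e : Finset (Fin n)), g₂ i).1 = 1)) :
    psiK2P T s g₁ = psiK2P T s g₂ := by
  rw [psiK2P, psiK2P, if_pos hg₁, if_pos hg₂]
  exact Finset.prod_congr rfl fun e _ => k2pFactor_congr _ (h e)

lemma k2pFactor_diag (a : ℂ) (h : Gp) : k2pFactor (a, a) h = if h = 0 then 1 else a := by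
  unfold k2pFactor
  split_ifs <;> simp_all [Prod.ext_iff]

lemma psiK2P_diag_const {n : ℕ} (T : PhyloBinaryTree n) (a : ℂ) {g : Fin n → Gp}
    (hg : ∑ i, g i = 0) {k : ℕ}
    (hk : (Finset.univ.filter fun e : ↥(fullSplits T) =>
      ∑ i ∈ (e : Finset (Fin n)), g i ≠ 0).card = k) :
    psiK2P T (fun _ => (a, a)) g = a ^ k := by
  simp only [psiK2P, if_pos hg, k2pFactor_diag, Finset.prod_ite, Finset.prod_const_one,
    Finset.prod_const, one_mul, hk]

/-- the linear form `f` vanishes on the whole image of the K2P mixture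
parameterization on `(T_{12|34}, T_{14|23})`, but does not vanish identically on the K2P
(indeed Jukes–Cantor) model on `T_{13|24}`. -/
theorem quartet_linear_invariant :
    (∀ (s1 : ↥(fullSplits T12_34) → ℂ × ℂ) (s2 : ↥(fullSplits T14_23) → ℂ × ℂ) (pi : ℂ),
      linformQuartet (psiMixK2P T12_34 T14_23 s1 s2 pi) = 0) ∧
    (∃ s : ↥(fullSplits T13_24) → ℂ × ℂ,
      (∀ e, (s e).1 = (s e).2) ∧ linformQuartet (psiK2P T13_24 s) ≠ 0) := by
  constructor
  · intro s1 s2 pi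
    have h₁ : psiK2P T12_34 s1 ![gG, gG, gG, gG] = psiK2P T12_34 s1 ![gG, gG, gT, gT] :=
      psiK2P_congr _ _ (by decide) (by decide) (by decide)
    have h₂ : psiK2P T12_34 s1 ![gG, gT, gG, gT] = psiK2P T12_34 s1 ![gG, gT, gT, gG] :=
      psiK2P_congr _ _ (by decide) (by decide) (by decide)
    have h₃ : psiK2P T14_23 s2 ![gG, gG, gG, gG] = psiK2P T14_23 s2 ![gG, gT, gT, gG] :=
      psiK2P_congr _ _ (by decide) (by decide) (by decide)
    have h₄ : psiK2P T14_23 s2 ![gG, gT, gG, gT] = psiK2P T14_23 s2 ![gG, gG, gT, gT] :=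
      psiK2P_congr _ _ (by decide) (by decide) (by decide)
    rw [linformQuartet, psiMixK2P, psiMixK2P, psiMixK2P, psiMixK2P, h₁, h₂, h₃, h₄]
    ring
  · refine ⟨fun _ => (-1, -1), fun _ => rfl, ?_⟩
    rw [linformQuartet, psiK2P_diag_const _ _ (by decide) (k := 4) (by decide),
      psiK2P_diag_const _ _ (by decide) (k := 4) (by decide),
      psiK2P_diag_const _ _ (by decide) (k := 5) (by decide),
      psiK2P_diag_const _ _ (by decide) (k := 5) (by decide)]
    norm_num
end

section
/- Let T1, T2, T3, T4 be binary trees on Fin 5 (not necessarily distinct). If the pairs (T1, T2) and (T3, T4) are quartet-matched, then {T1, T2} = {T3, T4} as unordered pairs, i.e. either (T1 = T3 and T2 = T4) or (T1 = T4 and T2 = T3). -/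
open scoped BigOperators

/-- The quartet tree induced by `T` on a 4-element subset `Q` of the taxa: the set of
2-element subsets `P` of `Q` cut out by a split of `T` restricting to a `2|2`-partition
of `Q` as `P` or its relative complement. -/
def quartet {n : ℕ} (T : PhyloBinaryTree n) (Q : Finset (Fin n)) : Set (Finset (Fin n)) :=
  {P | ∃ A ∈ fullSplits T, (A ∩ Q = P ∨ Aᶜ ∩ Q = P) ∧ (A ∩ Q).card = 2 ∧ (Aᶜ ∩ Q).card = 2}

/-- Two pairs of trees are quartet-matched if they induce the same pair of quartet trees
on every 4-element subset of the taxa. -/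
def quartetMatched {n : ℕ} (T1 T2 T3 T4 : PhyloBinaryTree n) : Prop :=
  ∀ Q : Finset (Fin n), Q.card = 4 →
    ((quartet T1 Q = quartet T3 Q ∧ quartet T2 Q = quartet T4 Q) ∨
     (quartet T1 Q = quartet T4 Q ∧ quartet T2 Q = quartet T3 Q))

/-! On five taxa a binary tree is determined by its two cherries, and the quartet it induces on
the taxa other than `x` has as sides the cherries avoiding `x` and their complements within the
quartet. So a pair of taxa is a side of three of the five quartets if it is a cherry of the tree,
and of at most one otherwise. Counting sides over both trees of a quartet-matched pair therefore
recovers the multiset of cherries of the two trees, and two pairs of trees on five taxa with the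
same multiset of cherries are equal as unordered pairs: a crossing would force two four-point
subsets of the five taxa to meet in at most two points. -/

open Finset

lemma sameSplits_image_of_eq_or_eq_compl {n : ℕ} (s : Finset (Finset (Fin n)))
    {f : Finset (Fin n) → Finset (Fin n)} (hf : ∀ A, f A = A ∨ f A = Aᶜ) :
    sameSplits s (s.image f) := by
  intro A
  simp only [mem_image]
  constructor
  · rintro (hA | hA)
    · rcases hf A with h | h
      · exact Or.inl ⟨A, hA, h⟩
      · exact Or.inr ⟨A, hA, h⟩
    · rcases hf Aᶜ with h | h
      · exact Or.inr ⟨Aᶜ, hA, h⟩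
      · exact Or.inl ⟨Aᶜ, hA, h.trans (compl_compl A)⟩
  · rintro (⟨B, hB, rfl⟩ | ⟨B, hB, hBA⟩) <;> rcases hf B with h | h
    · exact Or.inl (by rwa [h])
    · exact Or.inr (by rwa [h, compl_compl])
    · exact Or.inr (by rwa [← hBA, h])
    · exact Or.inl (by rwa [← compl_compl A, ← hBA, h, compl_compl])

lemma Split.Compat.compl_left {n : ℕ} {A B : Finset (Fin n)} (h : Split.Compat A B) :
    Split.Compat Aᶜ B := by
  unfold Split.Compat at *
  rw [compl_compl]
  tauto

lemma Split.Compat.symm {n : ℕ} {A B : Finset (Fin n)} (h : Split.Compat A B) :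
    Split.Compat B A := by
  unfold Split.Compat at *
  rw [inter_comm B A, inter_comm B Aᶜ, inter_comm Bᶜ A, inter_comm Bᶜ Aᶜ]
  tauto

/-- On five taxa every nontrivial split has a side with two elements: a cherry of the tree. -/
def cherry (A : Finset (Fin 5)) : Finset (Fin 5) := if A.card = 2 then A else Aᶜ

def cherries (T : PhyloBinaryTree 5) : Finset (Finset (Fin 5)) := T.splits.image cherry

lemma cherry_eq_or_eq_compl (A : Finset (Fin 5)) : cherry A = A ∨ cherry A = Aᶜ := by
  unfold cherry; split_ifs <;> simp

lemma sameSplits_cherries (T : PhyloBinaryTree 5) : sameSplits T.splits (cherries T) :=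
  sameSplits_image_of_eq_or_eq_compl _ cherry_eq_or_eq_compl

lemma sameTree_of_cherries_eq {T T' : PhyloBinaryTree 5} (h : cherries T = cherries T') :
    sameTree T T' := fun A =>
  (sameSplits_cherries T A).trans (h ▸ (sameSplits_cherries T' A).symm)

lemma card_cherry {A : Finset (Fin 5)} (hA : Split.Nontriv A) : (cherry A).card = 2 := by
  obtain ⟨h2, h3⟩ := hA
  unfold cherry
  split_ifs with h
  · exact h
  · rw [card_compl, Fintype.card_fin]; omega

lemma Split.Compat.cherry {A B : Finset (Fin 5)} (h : Split.Compat A B) :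
    Split.Compat (cherry A) (cherry B) := by
  rcases cherry_eq_or_eq_compl A with hA | hA <;> rcases cherry_eq_or_eq_compl B with hB | hB <;>
    rw [hA, hB]
  · exact h
  · exact h.symm.compl_left.symm
  · exact h.compl_left
  · exact h.compl_left.symm.compl_left.symm

lemma eq_or_eq_compl_of_cherry_eq {A B : Finset (Fin 5)} (h : cherry A = cherry B) :
    A = B ∨ A = Bᶜ := by
  rcases cherry_eq_or_eq_compl A with hA | hA <;> rcases cherry_eq_or_eq_compl B with hB | hB <;>
    rw [hA, hB] at h
  · exact Or.inl h
  · exact Or.inr h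
  · exact Or.inr (compl_eq_comm.mp h).symm
  · exact Or.inl (compl_inj_iff.mp h)

lemma Split.Compat.disjoint {c d : Finset (Fin 5)} (h : Split.Compat c d) (hc : c.card = 2)
    (hd : d.card = 2) (hcd : c ≠ d) : Disjoint c d := by
  have eq_of_subset : ∀ {a b : Finset (Fin 5)}, a ⊆ b → a.card = 2 → b.card = 2 → a = b :=
    fun hab ha hb => eq_of_subset_of_card_le hab (by omega)
  rcases h with h | h | h | h
  · exact disjoint_iff_inter_eq_empty.mpr h
  · exact absurd (eq_of_subset (by simpa [← sdiff_eq_inter_compl, sdiff_eq_empty_iff_subset]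
      using h) hc hd) hcd
  · exact absurd (eq_of_subset (by simpa [inter_comm, ← sdiff_eq_inter_compl,
      sdiff_eq_empty_iff_subset] using h) hd hc).symm hcd
  · have : (c ∪ d).card = 5 := by
      rw [← compl_union, compl_eq_empty_iff] at h
      rw [h, card_univ, Fintype.card_fin]
    have := card_union_le c d
    omega

structure IsCherryPair {n : ℕ} (C : Finset (Finset (Fin n))) : Prop where
  card_eq : C.card = 2
  card_mem : ∀ c ∈ C, c.card = 2
  disjoint : ∀ c ∈ C, ∀ d ∈ C, c ≠ d → Disjoint c d

lemma cherries_isCherryPair (T : PhyloBinaryTree 5) : IsCherryPair (cherries T) where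
  card_eq := by
    rw [cherries, card_image_of_injOn, T.card_splits]
    intro A hA B hB hAB
    by_contra hne
    exact (eq_or_eq_compl_of_cherry_eq hAB).elim hne (T.not_compl A hA B hB hne)
  card_mem := by
    simp only [cherries, mem_image]
    rintro _ ⟨A, hA, rfl⟩
    exact card_cherry (T.nontriv A hA)
  disjoint := by
    simp only [cherries, mem_image]
    rintro _ ⟨A, hA, rfl⟩ _ ⟨B, hB, rfl⟩ hne
    exact (T.compat A hA B hB).cherry.disjoint (card_cherry (T.nontriv A hA))
      (card_cherry (T.nontriv B hB)) hne

def cherryQuartet {n : ℕ} (C : Finset (Finset (Fin n))) (x : Fin n) : Finset (Finset (Fin n)) :=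
  (C.filter (x ∉ ·)).biUnion fun c => {c, (insert x c)ᶜ}

lemma mem_cherryQuartet {n : ℕ} {C : Finset (Finset (Fin n))} {x : Fin n} {P : Finset (Fin n)} :
    P ∈ cherryQuartet C x ↔ ∃ c ∈ C, x ∉ c ∧ (P = c ∨ P = (insert x c)ᶜ) := by
  simp [cherryQuartet, and_assoc]

lemma quartet_side_compl_iff {n : ℕ} (A Q P : Finset (Fin n)) :
    ((Aᶜ ∩ Q = P ∨ Aᶜᶜ ∩ Q = P) ∧ (Aᶜ ∩ Q).card = 2 ∧ (Aᶜᶜ ∩ Q).card = 2) ↔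
      ((A ∩ Q = P ∨ Aᶜ ∩ Q = P) ∧ (A ∩ Q).card = 2 ∧ (Aᶜ ∩ Q).card = 2) := by
  rw [compl_compl]
  tauto

lemma quartet_side_cherry_iff (A : Finset (Fin 5)) (x : Fin 5) (P : Finset (Fin 5)) :
    ((cherry A ∩ univ.erase x = P ∨ (cherry A)ᶜ ∩ univ.erase x = P) ∧
      (cherry A ∩ univ.erase x).card = 2 ∧ ((cherry A)ᶜ ∩ univ.erase x).card = 2) ↔
    ((A ∩ univ.erase x = P ∨ Aᶜ ∩ univ.erase x = P) ∧
      (A ∩ univ.erase x).card = 2 ∧ (Aᶜ ∩ univ.erase x).card = 2) := by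
  rcases cherry_eq_or_eq_compl A with h | h <;> rw [h]
  exact quartet_side_compl_iff A _ P

lemma quartet_side_iff_of_card_eq_two {c : Finset (Fin 5)} (hc : c.card = 2) (x : Fin 5)
    (P : Finset (Fin 5)) :
    ((c ∩ univ.erase x = P ∨ cᶜ ∩ univ.erase x = P) ∧
      (c ∩ univ.erase x).card = 2 ∧ (cᶜ ∩ univ.erase x).card = 2) ↔
    x ∉ c ∧ (P = c ∨ P = (insert x c)ᶜ) := by
  rw [inter_erase, inter_erase, inter_univ, inter_univ, ← compl_insert]
  by_cases hx : x ∈ c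
  · simp [hx, card_erase_of_mem, hc]
  · have : (insert x c)ᶜ.card = 2 := by
      rw [card_compl, card_insert_of_notMem hx, hc, Fintype.card_fin]
    simp only [erase_eq_of_notMem hx, hc, this, hx, not_false_eq_true, and_self, and_true,
      true_and]
    exact or_congr eq_comm eq_comm

lemma quartet_erase_eq (T : PhyloBinaryTree 5) (x : Fin 5) :
    quartet T (univ.erase x) = cherryQuartet (cherries T) x := by
  ext P
  simp only [quartet, fullSplits, cherries, Set.mem_ofPred_eq, mem_coe, mem_cherryQuartet,
    mem_union, mem_image, mem_univ, true_and]
  constructor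
  · rintro ⟨A, hA | ⟨i, rfl⟩, hside⟩
    · rw [← quartet_side_cherry_iff, quartet_side_iff_of_card_eq_two
        (card_cherry (T.nontriv A hA))] at hside
      exact ⟨_, ⟨A, hA, rfl⟩, hside⟩
    · have : ({i} ∩ univ.erase x).card ≤ 1 := (card_le_card inter_subset_left).trans
        (card_singleton i).le
      omega
  · rintro ⟨_, ⟨A, hA, rfl⟩, hside⟩
    rw [← quartet_side_iff_of_card_eq_two (card_cherry (T.nontriv A hA)),
      quartet_side_cherry_iff] at hside
    exact ⟨A, Or.inl hA, hside⟩

lemma filter_mem_cherryQuartet_of_mem {n : ℕ} {C : Finset (Finset (Fin n))}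
    {P : Finset (Fin n)} (hP : P ∈ C) : univ.filter (fun x => P ∈ cherryQuartet C x) = Pᶜ := by
  ext x
  simp only [mem_filter, mem_univ, true_and, mem_compl, mem_cherryQuartet]
  constructor
  · rintro ⟨c, -, hx, rfl | rfl⟩
    · exact hx
    · simp
  · exact fun hx => ⟨P, hP, hx, Or.inl rfl⟩

lemma card_filter_mem_cherryQuartet_le_one {n : ℕ} {C : Finset (Finset (Fin n))}
    (hC : IsCherryPair C) {P : Finset (Fin n)} (hP : P ∉ C) :
    (univ.filter (fun x => P ∈ cherryQuartet C x)).card ≤ 1 := by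
  have hside : ∀ x, P ∈ cherryQuartet C x → ∃ c ∈ C, x ∉ c ∧ insert x c = Pᶜ := by
    intro x hx
    obtain ⟨c, hc, hxc, rfl | rfl⟩ := mem_cherryQuartet.mp hx
    · exact absurd hc hP
    · exact ⟨c, hc, hxc, (compl_compl _).symm⟩
  refine card_le_one.mpr fun x hx y hy => ?_
  obtain ⟨c, hc, hxc, hcx⟩ := hside x (mem_filter.mp hx).2
  obtain ⟨d, hd, hyd, hdy⟩ := hside y (mem_filter.mp hy).2
  have hxy : insert x c = insert y d := hcx.trans hdy.symm
  by_cases hcd : c = d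
  · subst hcd
    have : x ∈ insert y c := hxy ▸ mem_insert_self x c
    simpa [hxc] using this
  · -- `c` would lie in `insert y d` while being disjoint from `d`
    have hsub : c ⊆ {y} := fun z hz => by
      have : z ∈ insert y d := hxy ▸ mem_insert_of_mem hz
      rcases mem_insert.mp this with rfl | hzd
      · exact mem_singleton_self z
      · exact absurd hzd (disjoint_left.mp (hC.disjoint c hc d hd hcd) hz)
    have := card_le_card hsub
    rw [hC.card_mem c hc, card_singleton] at this
    omega

lemma card_filter_add_card_filter_eq_of_match {ι β : Type*} [Fintype ι] (p : β → Prop)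
    [DecidablePred p] {f₁ f₂ f₃ f₄ : ι → β}
    (h : ∀ x, (f₁ x = f₃ x ∧ f₂ x = f₄ x) ∨ (f₁ x = f₄ x ∧ f₂ x = f₃ x)) :
    (univ.filter fun x => p (f₁ x)).card + (univ.filter fun x => p (f₂ x)).card =
      (univ.filter fun x => p (f₃ x)).card + (univ.filter fun x => p (f₄ x)).card := by
  simp only [card_filter, ← sum_add_distrib]
  refine sum_congr rfl fun x _ => ?_
  rcases h x with ⟨h₁, h₂⟩ | ⟨h₁, h₂⟩ <;> simp only [h₁, h₂]
  exact add_comm _ _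

/-- The number of quartets containing `P` as a side is `3` when `P` is a cherry and at most `1`
otherwise, so the quartets count every cherry with its multiplicity in the pair of trees. -/
lemma val_add_val_eq_of_cherryQuartet_match {C₁ C₂ C₃ C₄ : Finset (Finset (Fin 5))}
    (h₁ : IsCherryPair C₁) (h₂ : IsCherryPair C₂) (h₃ : IsCherryPair C₃) (h₄ : IsCherryPair C₄)
    (h : ∀ x, (cherryQuartet C₁ x = cherryQuartet C₃ x ∧ cherryQuartet C₂ x = cherryQuartet C₄ x) ∨
      (cherryQuartet C₁ x = cherryQuartet C₄ x ∧ cherryQuartet C₂ x = cherryQuartet C₃ x)) :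
    C₁.val + C₂.val = C₃.val + C₄.val := by
  ext P
  have hcount := card_filter_add_card_filter_eq_of_match (P ∈ ·) h
  have hmult : ∀ C, IsCherryPair C →
      (P ∈ C ∧ (univ.filter fun x => P ∈ cherryQuartet C x).card = 3) ∨
        (P ∉ C ∧ (univ.filter fun x => P ∈ cherryQuartet C x).card ≤ 1) := by
    intro C hC
    by_cases hP : P ∈ C
    · refine Or.inl ⟨hP, ?_⟩
      rw [filter_mem_cherryQuartet_of_mem hP, card_compl, hC.card_mem P hP,
        Fintype.card_fin]
    · exact Or.inr ⟨hP, card_filter_mem_cherryQuartet_le_one hC hP⟩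
  simp only [Multiset.count_add, Multiset.count_eq_of_nodup (Finset.nodup _), Finset.mem_val]
  rcases hmult C₁ h₁ with ⟨m₁, c₁⟩ | ⟨m₁, c₁⟩ <;> rcases hmult C₂ h₂ with ⟨m₂, c₂⟩ | ⟨m₂, c₂⟩ <;>
    rcases hmult C₃ h₃ with ⟨m₃, c₃⟩ | ⟨m₃, c₃⟩ <;> rcases hmult C₄ h₄ with ⟨m₄, c₄⟩ | ⟨m₄, c₄⟩ <;>
    simp only [m₁, m₂, m₃, m₄, if_true, if_false] <;> omega

lemma card_inter_le_one_of_ne {α : Type*} [DecidableEq α] {a b : Finset α} (ha : a.card = 2)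
    (hb : b.card = 2) (hab : a ≠ b) : (a ∩ b).card ≤ 1 := by
  by_contra! h
  have hia : a ∩ b = a := eq_of_subset_of_card_le inter_subset_left (by omega)
  exact hab (eq_of_subset_of_card_le (hia ▸ inter_subset_right) (by omega))

/-- The unions `a ∪ b` and `a' ∪ b'` have four points each, but meet only in
`(a ∩ b') ∪ (b ∩ a')`, which has at most two points. -/
lemma false_of_crossing_matchings {α : Type*} [Fintype α] [DecidableEq α]
    (hα : Fintype.card α ≤ 5) {a b a' b' : Finset α} (ha : a.card = 2) (hb : b.card = 2)
    (ha' : a'.card = 2) (hb' : b'.card = 2) (hab : Disjoint a b) (ha'b' : Disjoint a' b')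
    (haa' : Disjoint a a') (hbb' : Disjoint b b') (hab' : a ≠ b') (hba' : b ≠ a') : False := by
  have hunion := card_union_add_card_inter (a ∪ b) (a' ∪ b')
  have hle : (a ∪ b ∪ (a' ∪ b')).card ≤ 5 := (card_le_univ _).trans hα
  have hsub : (a ∪ b) ∩ (a' ∪ b') ⊆ (a ∩ b') ∪ (b ∩ a') := by
    intro z hz
    simp only [mem_inter, mem_union] at hz ⊢
    have := disjoint_left.mp haa'
    have := disjoint_left.mp hbb'
    tauto
  have h₁ := card_inter_le_one_of_ne ha hb' hab'
  have h₂ := card_inter_le_one_of_ne hb ha' hba'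
  have h₃ := (card_le_card hsub).trans (card_union_le _ _)
  rw [card_union_of_disjoint hab, card_union_of_disjoint ha'b'] at hunion
  omega

lemma ite_mem_add_ite_mem_eq_of_val_add_eq {α : Type*} [DecidableEq α] {C₁ C₂ C₃ C₄ : Finset α}
    (h : C₁.val + C₂.val = C₃.val + C₄.val) (P : α) :
    ((if P ∈ C₁ then 1 else 0) + if P ∈ C₂ then 1 else 0) =
      (if P ∈ C₃ then 1 else 0) + if P ∈ C₄ then 1 else 0 := by
  simpa only [Multiset.count_add, Multiset.count_eq_of_nodup (Finset.nodup _), Finset.mem_val]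
    using congrArg (Multiset.count P) h

lemma false_of_val_add_eq_of_crossing {C₁ C₂ C₃ C₄ : Finset (Finset (Fin 5))}
    (h₁ : IsCherryPair C₁) (h₂ : IsCherryPair C₂) (h₃ : IsCherryPair C₃) (h₄ : IsCherryPair C₄)
    (h : C₁.val + C₂.val = C₃.val + C₄.val) {a b : Finset (Fin 5)} (ha : a ∈ C₁) (hb : b ∈ C₁)
    (ha₃ : a ∈ C₃) (ha₄ : a ∉ C₄) (hb₃ : b ∉ C₃) (hb₄ : b ∈ C₄) : False := by
  have hcount := ite_mem_add_ite_mem_eq_of_val_add_eq h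
  have hab : a ≠ b := by rintro rfl; exact ha₄ hb₄
  have hC₁ : ∀ P, P ∈ C₁ ↔ P = a ∨ P = b := by
    have : {a, b} = C₁ := eq_of_subset_of_card_le (insert_subset ha (singleton_subset_iff.mpr hb))
      (by rw [h₁.card_eq, card_pair hab])
    simp [← this]
  obtain ⟨a', ha'₃, ha'a⟩ := exists_mem_ne (by rw [h₃.card_eq]; omega) a
  obtain ⟨b', hb'₄, hb'b⟩ := exists_mem_ne (by rw [h₄.card_eq]; omega) b
  have ha'b : a' ≠ b := by rintro rfl; exact hb₃ ha'₃
  have hb'a : b' ≠ a := by rintro rfl; exact ha₄ hb'₄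
  -- the other cherries `a'` of `C₃` and `b'` of `C₄` are not in `C₁`, so they are counted by `C₂`
  have ha' := hcount a'
  have hb' := hcount b'
  simp only [hC₁, ha'a, ha'b, hb'a, hb'b, ha'₃, hb'₄, or_self, if_true, if_false] at ha' hb'
  obtain ⟨ha'₂, ha'₄⟩ : a' ∈ C₂ ∧ a' ∉ C₄ := by
    by_cases h₂ : a' ∈ C₂ <;> by_cases h₄ : a' ∈ C₄ <;> simp [h₂, h₄] at ha' ⊢
  obtain ⟨hb'₂, -⟩ : b' ∈ C₂ ∧ b' ∉ C₃ := by
    by_cases h₂ : b' ∈ C₂ <;> by_cases h₃ : b' ∈ C₃ <;> simp [h₂, h₃] at hb' ⊢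
  exact false_of_crossing_matchings (by simp) (h₁.card_mem a ha) (h₁.card_mem b hb)
    (h₂.card_mem a' ha'₂) (h₂.card_mem b' hb'₂) (h₁.disjoint a ha b hb hab)
    (h₂.disjoint a' ha'₂ b' hb'₂ (by rintro rfl; exact ha'₄ hb'₄))
    (h₃.disjoint a ha₃ a' ha'₃ ha'a.symm) (h₄.disjoint b hb₄ b' hb'₄ hb'b.symm) hb'a.symm ha'b.symm

lemma eq_and_eq_or_eq_and_eq_of_val_add_eq {C₁ C₂ C₃ C₄ : Finset (Finset (Fin 5))}
    (h₁ : IsCherryPair C₁) (h₂ : IsCherryPair C₂) (h₃ : IsCherryPair C₃) (h₄ : IsCherryPair C₄)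
    (h : C₁.val + C₂.val = C₃.val + C₄.val) : (C₁ = C₃ ∧ C₂ = C₄) ∨ (C₁ = C₄ ∧ C₂ = C₃) := by
  have h' : C₁.val + C₂.val = C₄.val + C₃.val := h.trans (add_comm _ _)
  suffices C₁ = C₃ ∨ C₁ = C₄ by
    rcases this with rfl | rfl
    · exact Or.inl ⟨rfl, val_inj.mp (add_left_cancel h)⟩
    · exact Or.inr ⟨rfl, val_inj.mp (add_left_cancel h')⟩
  obtain ⟨a, b, -, hC₁⟩ := card_eq_two.mp h₁.card_eq
  have ha : a ∈ C₁ := by simp [hC₁]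
  have hb : b ∈ C₁ := by simp [hC₁]
  have eq_of_mem : ∀ {D}, IsCherryPair D → a ∈ D → b ∈ D → C₁ = D := fun hD haD hbD =>
    eq_of_subset_of_card_le (hC₁ ▸ insert_subset haD (singleton_subset_iff.mpr hbD))
      (by rw [h₁.card_eq, hD.card_eq])
  have cover : ∀ P ∈ C₁, P ∈ C₃ ∨ P ∈ C₄ := fun P hP => by
    have := ite_mem_add_ite_mem_eq_of_val_add_eq h P
    by_contra! hP'
    simp [hP, hP'.1, hP'.2] at this
  by_cases h₃ab : a ∈ C₃ ∧ b ∈ C₃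
  · exact Or.inl (eq_of_mem h₃ h₃ab.1 h₃ab.2)
  by_cases h₄ab : a ∈ C₄ ∧ b ∈ C₄
  · exact Or.inr (eq_of_mem h₄ h₄ab.1 h₄ab.2)
  exfalso
  rcases cover a ha with ha₃ | ha₄
  · have hb₃ : b ∉ C₃ := fun hb₃ => h₃ab ⟨ha₃, hb₃⟩
    have hb₄ := (cover b hb).resolve_left hb₃
    exact false_of_val_add_eq_of_crossing h₁ h₂ h₃ h₄ h ha hb ha₃
      (fun ha₄ => h₄ab ⟨ha₄, hb₄⟩) hb₃ hb₄
  · have hb₄ : b ∉ C₄ := fun hb₄ => h₄ab ⟨ha₄, hb₄⟩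
    have hb₃ := (cover b hb).resolve_right hb₄
    exact false_of_val_add_eq_of_crossing h₁ h₂ h₄ h₃ h' ha hb ha₄
      (fun ha₃ => h₃ab ⟨ha₃, hb₃⟩) hb₄ hb₃

/-- on 5 taxa, quartet-matched pairs of binary trees are equal as
unordered pairs (tree equality being up to complementation of splits). -/
theorem quartet_matched_five_taxa (T1 T2 T3 T4 : PhyloBinaryTree 5)
    (h : quartetMatched T1 T2 T3 T4) :
    (sameTree T1 T3 ∧ sameTree T2 T4) ∨ (sameTree T1 T4 ∧ sameTree T2 T3) := by
  have hmatch : ∀ x : Fin 5,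
      (cherryQuartet (cherries T1) x = cherryQuartet (cherries T3) x ∧
        cherryQuartet (cherries T2) x = cherryQuartet (cherries T4) x) ∨
      (cherryQuartet (cherries T1) x = cherryQuartet (cherries T4) x ∧
        cherryQuartet (cherries T2) x = cherryQuartet (cherries T3) x) := by
    intro x
    have hcard : (univ.erase x).card = 4 := by simp
    simpa only [quartet_erase_eq, coe_inj] using h _ hcard
  have hC := cherries_isCherryPair
  rcases eq_and_eq_or_eq_and_eq_of_val_add_eq (hC T1) (hC T2) (hC T3) (hC T4)
      (val_add_val_eq_of_cherryQuartet_match (hC T1) (hC T2) (hC T3) (hC T4) hmatch) with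
    ⟨h13, h24⟩ | ⟨h14, h23⟩
  · exact Or.inl ⟨sameTree_of_cherries_eq h13, sameTree_of_cherries_eq h24⟩
  · exact Or.inr ⟨sameTree_of_cherries_eq h14, sameTree_of_cherries_eq h23⟩
end

section
/- Let T1, T2, T3 be binary trees on Fin n, n ≥ 4. Suppose there is a 4-element subset Q ⊆ Fin n such that the induced quartet tree T3|_Q is equal to neither T1|_Q nor T2|_Q. Then for the Jukes–Cantor model, the image of ψ_{T3} is not contained in the Zariski closure of the image of the mixture parameterization ψ_{T1,T2}; that is, there exist JC parameters s on T3 and a polynomial f vanishing on the entire image of ψ_{T1,T2} with f(ψ_{T3}(s)) ≠ 0. (Equivalently, V_{T3} ⊄ V_{T1} ∗ V_{T2}.) -/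
open scoped BigOperators

/-! Some split `A` of `T3` cuts `Q` two against two, since every binary tree resolves every
quartet; label `Q` by `Fin 4` so that `A` cuts it as `01|23`. A JC coordinate is the product of
the `a_e` over the splits `e` on which the site pattern does not sum to zero, and for patterns
supported on `Q` this depends only on the trace of `e` on `Q`. If the quartet of
a tree on `Q` is `02|13` or `03|12`, then the patterns `TTTT` and `GGCC` have the same zero sets
as `GCGC` and `GCCG`, in one order or the other, so the linear form
`x_TTTT + x_GGCC - x_GCGC - x_GCCG` vanishes on the JC image of the tree, hence on the mixture
of `T1` and `T2`. At the parameters of `T3` with `a_A = 0` and all others `1` it takes the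
value `2`. -/

open Finset

section Laminar

variable {α : Type*}

def IsLaminar (F : Finset (Finset α)) : Prop :=
  ∀ X ∈ F, ∀ Y ∈ F, Disjoint X Y ∨ X ⊆ Y ∨ Y ⊆ X

namespace IsLaminar

variable {F : Finset (Finset α)}

lemma subset_or_subset (hF : IsLaminar F) {X Y : Finset α} (hX : X ∈ F) (hY : Y ∈ F) {z : α}
    (hzX : z ∈ X) (hzY : z ∈ Y) : X ⊆ Y ∨ Y ⊆ X :=
  (hF X hX Y hY).resolve_left (not_disjoint_iff.mpr ⟨z, hzX, hzY⟩)

lemma filter (hF : IsLaminar F) (p : Finset α → Prop) [DecidablePred p] :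
    IsLaminar (F.filter p) :=
  fun X hX Y hY => hF X (mem_filter.mp hX).1 Y (mem_filter.mp hY).1

variable [DecidableEq α]

lemma insert (hF : IsLaminar F) {M : Finset α} (hFM : ∀ X ∈ F, X ⊆ M) :
    IsLaminar (insert M F) := by
  intro X hX Y hY
  rcases mem_insert.mp hX with hXM | hX <;> rcases mem_insert.mp hY with hYM | hY
  · exact Or.inr (Or.inl (hXM.trans hYM.symm).subset)
  · exact Or.inr (Or.inr (hXM ▸ hFM Y hY))
  · exact Or.inr (Or.inl (hYM ▸ hFM X hX))
  · exact hF X hX Y hY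

lemma image_erase (hF : IsLaminar F) (x : α) : IsLaminar (F.image (·.erase x)) := by
  simp only [IsLaminar, mem_image, forall_exists_index, and_imp, forall_apply_eq_imp_iff₂]
  intro X hX Y hY
  rcases hF X hX Y hY with h | h | h
  · exact Or.inl (h.mono (erase_subset x X) (erase_subset x Y))
  · exact Or.inr (Or.inl (erase_subset_erase x h))
  · exact Or.inr (Or.inr (erase_subset_erase x h))

/-- Only the smallest member through `x` can shrink to a singleton or collide with another
member when `x` is erased. -/
lemma card_le_card_erase_add_one (hF : IsLaminar F) (h2 : ∀ X ∈ F, 2 ≤ X.card) (x : α) :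
    F.card ≤ ((F.image (·.erase x)).filter (2 ≤ ·.card)).card + 1 := by
  suffices ∃ G ⊆ F, F.card ≤ G.card + 1 ∧ Set.InjOn (fun X : Finset α => X.erase x) G ∧
      ∀ X ∈ G, 2 ≤ (X.erase x).card by
    obtain ⟨G, hGF, hcard, hinj, h2G⟩ := this
    calc F.card ≤ G.card + 1 := hcard
      _ = (G.image (·.erase x)).card + 1 := by rw [card_image_of_injOn hinj]
      _ ≤ _ := by
        gcongr
        intro Y hY
        obtain ⟨X, hX, rfl⟩ := mem_image.mp hY
        exact mem_filter.mpr ⟨mem_image_of_mem _ (hGF hX), h2G X hX⟩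
  by_cases hx : ∃ X ∈ F, x ∈ X
  swap
  · push Not at hx
    refine ⟨F, Subset.rfl, by omega, fun X hX Y hY h => ?_, fun X hX => ?_⟩
    · simpa [erase_eq_of_notMem (hx X hX), erase_eq_of_notMem (hx Y hY)] using h
    · rw [erase_eq_of_notMem (hx X hX)]; exact h2 X hX
  obtain ⟨A, hA, hmin⟩ := (F.filter (x ∈ ·)).exists_min_image card
    (let ⟨X, hX, hxX⟩ := hx; ⟨X, mem_filter.mpr ⟨hX, hxX⟩⟩)
  obtain ⟨hAF, hxA⟩ := mem_filter.mp hA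
  have hsup : ∀ X ∈ F.erase A, x ∈ X → A ⊂ X := by
    intro X hX hxX
    obtain ⟨hXA, hXF⟩ := mem_erase.mp hX
    rcases hF.subset_or_subset hAF hXF hxA hxX with h | h
    · exact ssubset_of_subset_of_ne h (Ne.symm hXA)
    · exact absurd (eq_of_subset_of_card_le h (hmin X (mem_filter.mpr ⟨hXF, hxX⟩))) hXA
  obtain ⟨y, hyA, hyx⟩ := exists_mem_ne (h2 A hAF) x
  have hx_mem : ∀ X ∈ F.erase A, ∀ Y ∈ F.erase A,
      X.erase x = Y.erase x → x ∈ X → x ∈ Y := by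
    intro X hX Y hY h hxX
    have hAX := hsup X hX hxX
    have hyY : y ∈ Y := mem_of_mem_erase (h ▸ mem_erase.mpr ⟨hyx, hAX.subset hyA⟩)
    by_contra hxY
    rcases hF.subset_or_subset hAF (mem_of_mem_erase hY) hyA hyY with h' | h'
    · exact hxY (h' hxA)
    · refine hAX.2 ?_
      rw [← insert_erase hxX, h]
      exact insert_subset hxA ((erase_subset x Y).trans h')
  refine ⟨F.erase A, erase_subset A F, (card_erase_add_one hAF).ge, fun X hX Y hY h => ?_,
    fun X hX => ?_⟩
  · simp only at h
    by_cases hxX : x ∈ X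
    · rw [← insert_erase hxX, ← insert_erase (hx_mem X hX Y hY h hxX), h]
    · have hxY : x ∉ Y := fun hxY => hxX (hx_mem Y hY X hX h.symm hxY)
      rwa [erase_eq_of_notMem hxX, erase_eq_of_notMem hxY] at h
  · by_cases hxX : x ∈ X
    · have := card_lt_card (hsup X hX hxX)
      have := h2 A hAF
      rw [card_erase_of_mem hxX]
      omega
    · rw [erase_eq_of_notMem hxX]; exact h2 X (mem_of_mem_erase hX)

theorem card_add_two_le (hF : IsLaminar F) {M Q : Finset α} (hFM : ∀ X ∈ F, X ⊆ M)
    (h2 : ∀ X ∈ F, 2 ≤ X.card) (hQM : Q ⊆ M) (hQ : Q.card = 3)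
    (hFQ : ∀ X ∈ F, (X ∩ Q).card ≠ 2) : F.card + 2 ≤ M.card := by
  induction hk : (M \ Q).card generalizing F M with
  | zero =>
    have hMQ : M ⊆ Q := sdiff_eq_empty_iff_subset.mp (card_eq_zero.mp hk)
    have hFQ' : ∀ X ∈ F, X = Q := by
      intro X hX
      have hXQ := (hFM X hX).trans hMQ
      have := hFQ X hX
      rw [inter_eq_left.mpr hXQ] at this
      exact eq_of_subset_of_card_le hXQ (by have := h2 X hX; have := card_le_card hXQ; omega)
    have : F.card ≤ 1 := card_le_one.mpr fun X hX Y hY => (hFQ' X hX).trans (hFQ' Y hY).symm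
    have := card_le_card hQM
    omega
  | succ k ih =>
    obtain ⟨x, hx⟩ : (M \ Q).Nonempty := card_pos.mp (by omega)
    obtain ⟨hxM, hxQ⟩ := mem_sdiff.mp hx
    have hle := hF.card_le_card_erase_add_one h2 x
    have := ih ((hF.image_erase x).filter _) (M := M.erase x)
      (fun X hX => by
        obtain ⟨Y, hY, rfl⟩ := mem_image.mp (mem_filter.mp hX).1
        exact erase_subset_erase x (hFM Y hY))
      (fun X hX => (mem_filter.mp hX).2)
      (fun z hz => mem_erase.mpr ⟨fun h => hxQ (h ▸ hz), hQM hz⟩)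
      (fun X hX => by
        obtain ⟨Y, hY, rfl⟩ := mem_image.mp (mem_filter.mp hX).1
        rw [erase_inter, erase_eq_of_notMem fun h => hxQ (mem_inter.mp h).2]
        exact hFQ Y hY)
      (by rw [erase_sdiff_comm, card_erase_of_mem hx, hk]; rfl)
    rw [card_erase_of_mem hxM] at this
    omega

end IsLaminar

end Laminar

section Splits

variable {n : ℕ}

lemma compl_inter_eq_sdiff (A Q : Finset (Fin n)) : Aᶜ ∩ Q = Q \ (A ∩ Q) := by
  ext; simp [and_comm]

lemma card_compl_inter (A Q : Finset (Fin n)) : (Aᶜ ∩ Q).card = Q.card - (A ∩ Q).card := by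
  rw [compl_inter_eq_sdiff, card_sdiff_of_subset inter_subset_right]

lemma compl_inter_eq_of_inter_eq {A B Q : Finset (Fin n)} (h : A ∩ Q = B ∩ Q) :
    Aᶜ ∩ Q = Bᶜ ∩ Q := by
  rw [compl_inter_eq_sdiff, h, ← compl_inter_eq_sdiff]

lemma Split.compat_iff_subset {A B : Finset (Fin n)} :
    Split.Compat A B ↔ A ⊆ Bᶜ ∨ A ⊆ B ∨ B ⊆ A ∨ Aᶜ ⊆ B := by
  simp only [Split.Compat, ← sdiff_eq_empty_iff_subset, sdiff_eq_inter_compl, compl_compl,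
    inter_comm B Aᶜ]

namespace Split.Compat

variable {A B : Finset (Fin n)}

lemma compl_left_s10 (h : Split.Compat A B) : Split.Compat Aᶜ B := by
  unfold Split.Compat at *; rw [compl_compl]; tauto

lemma compl_right (h : Split.Compat A B) : Split.Compat A Bᶜ := by
  unfold Split.Compat at *; rw [compl_compl]; tauto

lemma disjoint_or_subset_or_subset (h : Split.Compat A B) {x : Fin n} (hA : x ∉ A)
    (hB : x ∉ B) : Disjoint A B ∨ A ⊆ B ∨ B ⊆ A := by
  rcases compat_iff_subset.mp h with h | h | h | h
  · exact Or.inl (subset_compl_iff_disjoint_right.mp h)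
  · exact Or.inr (Or.inl h)
  · exact Or.inr (Or.inr h)
  · exact absurd (h (mem_compl.mpr hA)) hB

lemma inter_eq_or_compl_inter_eq (h : Split.Compat A B) {Q : Finset (Fin n)} (hQ : Q.card = 4)
    (hA : (A ∩ Q).card = 2) (hB : (B ∩ Q).card = 2) :
    B ∩ Q = A ∩ Q ∨ B ∩ Q = Aᶜ ∩ Q := by
  have hAc : (Aᶜ ∩ Q).card = 2 := by rw [card_compl_inter, hQ, hA]
  rcases compat_iff_subset.mp h with h | h | h | h
  · exact Or.inr (eq_of_subset_of_card_le (inter_subset_inter_right (subset_compl_comm.mp h))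
      (by omega))
  · exact Or.inl (eq_of_subset_of_card_le (inter_subset_inter_right h) (by omega)).symm
  · exact Or.inl (eq_of_subset_of_card_le (inter_subset_inter_right h) (by omega))
  · exact Or.inr (eq_of_subset_of_card_le (inter_subset_inter_right h) (by omega)).symm

end Split.Compat

lemma mem_splits_of_two_le_card_inter {T : PhyloBinaryTree n} {e Q : Finset (Fin n)}
    (he : e ∈ fullSplits T) (h : 2 ≤ (e ∩ Q).card) : e ∈ T.splits := by
  rcases mem_union.mp he with he | he
  · exact he
  · obtain ⟨i, -, rfl⟩ := mem_image.mp he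
    have := card_le_card (inter_subset_left : {i} ∩ Q ⊆ {i})
    simp only [card_singleton] at this
    omega

end Splits

section Resolution

variable {n : ℕ}

def Split.sideWithout (x : Fin n) (A : Finset (Fin n)) : Finset (Fin n) :=
  if x ∈ A then Aᶜ else A

namespace Split

lemma notMem_sideWithout (x : Fin n) (A : Finset (Fin n)) : x ∉ sideWithout x A := by
  unfold sideWithout; split_ifs with h <;> simp [h]

lemma sideWithout_eq_or (x : Fin n) (A : Finset (Fin n)) :
    sideWithout x A = A ∨ sideWithout x A = Aᶜ := by
  unfold sideWithout; split_ifs <;> simp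

lemma Compat.sideWithout {A B : Finset (Fin n)} (h : Split.Compat A B) (x : Fin n) :
    Split.Compat (sideWithout x A) (sideWithout x B) := by
  rcases sideWithout_eq_or x A with hA | hA <;> rcases sideWithout_eq_or x B with hB | hB <;>
    rw [hA, hB]
  exacts [h, h.compl_right, h.compl_left_s10, h.compl_left_s10.compl_right]

end Split

open Split

lemma PhyloBinaryTree.injOn_sideWithout (T : PhyloBinaryTree n) (x : Fin n) :
    Set.InjOn (sideWithout x) T.splits := by
  intro A hA B hB h
  by_contra hne
  refine T.not_compl A hA B hB hne ?_
  rcases sideWithout_eq_or x A with hA' | hA' <;> rcases sideWithout_eq_or x B with hB' | hB' <;>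
    rw [hA', hB'] at h
  · exact absurd h hne
  · exact h
  · exact (compl_eq_comm.mp h).symm
  · exact absurd (compl_inj_iff.mp h) hne

lemma PhyloBinaryTree.card_sideWithout (T : PhyloBinaryTree n) {A : Finset (Fin n)}
    (hA : A ∈ T.splits) (x : Fin n) :
    2 ≤ (sideWithout x A).card ∧ (sideWithout x A).card ≤ n - 2 := by
  obtain ⟨h2, hn2⟩ := T.nontriv A hA
  rcases sideWithout_eq_or x A with h | h <;> rw [h]
  · exact ⟨h2, hn2⟩
  · rw [card_compl, Fintype.card_fin]; omega

lemma card_sideWithout_inter_erase_ne_two {A Q : Finset (Fin n)} {x : Fin n} (hQ : Q.card = 4)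
    (hAQ : (A ∩ Q).card ≠ 2) : (sideWithout x A ∩ Q.erase x).card ≠ 2 := by
  have := card_le_card (inter_subset_right : A ∩ Q ⊆ Q)
  rw [inter_erase, erase_eq_of_notMem fun h => notMem_sideWithout x A (mem_inter.mp h).1]
  rcases sideWithout_eq_or x A with h | h <;> rw [h]
  · exact hAQ
  · rw [card_compl_inter]; omega

/-- Orienting every split away from a leaf `x ∈ Q` and adding the set of all other leaves gives
`n - 2` laminar sets in an `(n - 1)`-set: too many for `IsLaminar.card_add_two_le` unless some
split cuts `Q` two against two. -/
theorem PhyloBinaryTree.exists_split_card_inter_eq_two (T : PhyloBinaryTree n)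
    {Q : Finset (Fin n)} (hQ : Q.card = 4) : ∃ A ∈ T.splits, (A ∩ Q).card = 2 := by
  by_contra! hT
  obtain ⟨x, hxQ⟩ : Q.Nonempty := card_pos.mp (by omega)
  have hn : 4 ≤ n := by simpa [hQ] using card_le_univ Q
  set F := T.splits.image (sideWithout x)
  have hMcard : (univ.erase x).card = n - 1 := by
    rw [card_erase_of_mem (mem_univ x), card_univ, Fintype.card_fin]
  have hM : univ.erase x ∉ F := by
    intro hM
    obtain ⟨A, hA, hAM⟩ := mem_image.mp hM
    have := (T.card_sideWithout hA x).2
    rw [hAM, hMcard] at this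
    omega
  have hlam : IsLaminar F := by
    simp only [F, IsLaminar, forall_mem_image]
    intro A hA B hB
    exact ((T.compat A hA B hB).sideWithout x).disjoint_or_subset_or_subset
      (notMem_sideWithout x A) (notMem_sideWithout x B)
  have hsub : ∀ X ∈ F, X ⊆ univ.erase x := by
    simp only [F, forall_mem_image, subset_erase]
    exact fun A _ => ⟨subset_univ _, notMem_sideWithout x A⟩
  have := (hlam.insert hsub).card_add_two_le (Q := Q.erase x) (fun X hX => ?_) (fun X hX => ?_)
    (erase_subset_erase x (subset_univ Q)) (by rw [card_erase_of_mem hxQ, hQ]) (fun X hX => ?_)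
  · rw [card_insert_of_notMem hM, card_image_of_injOn (T.injOn_sideWithout x), T.card_splits,
      hMcard] at this
    omega
  all_goals rcases mem_insert.mp hX with rfl | hX
  · exact Subset.rfl
  · exact hsub X hX
  · omega
  · obtain ⟨A, hA, rfl⟩ := mem_image.mp hX; exact (T.card_sideWithout hA x).1
  · rw [inter_eq_right.mpr (erase_subset_erase x (subset_univ Q)), card_erase_of_mem hxQ, hQ]
    omega
  · obtain ⟨A, hA, rfl⟩ := mem_image.mp hX
    exact card_sideWithout_inter_erase_ne_two hQ (hT A hA)

end Resolution

section Quartet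

variable {n : ℕ} {Q : Finset (Fin n)}

lemma quartet_eq_pair {T : PhyloBinaryTree n} {A : Finset (Fin n)} (hQ : Q.card = 4)
    (hA : A ∈ T.splits) (hAQ : (A ∩ Q).card = 2) : quartet T Q = {A ∩ Q, Aᶜ ∩ Q} := by
  ext P
  simp only [quartet, Set.mem_ofPred_eq, Set.mem_insert_iff, Set.mem_singleton_iff]
  constructor
  · rintro ⟨B, hB, hP, hBQ, -⟩
    have hB' := mem_splits_of_two_le_card_inter hB hBQ.ge
    rcases (T.compat A hA B hB').inter_eq_or_compl_inter_eq hQ hAQ hBQ with h | h <;>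
      rcases hP with rfl | rfl
    · exact Or.inl h
    · exact Or.inr (compl_inter_eq_of_inter_eq h)
    · exact Or.inr h
    · rw [compl_inter_eq_of_inter_eq h, compl_compl]; exact Or.inl rfl
  · have hAc : (Aᶜ ∩ Q).card = 2 := by rw [card_compl_inter, hQ, hAQ]
    rintro (rfl | rfl)
    · exact ⟨A, mem_union_left _ hA, Or.inl rfl, hAQ, hAc⟩
    · exact ⟨A, mem_union_left _ hA, Or.inr rfl, hAQ, hAc⟩

lemma inter_ne_of_quartet_ne {T T' : PhyloBinaryTree n} {A B : Finset (Fin n)} (hQ : Q.card = 4)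
    (hA : A ∈ T.splits) (hAQ : (A ∩ Q).card = 2) (hB : B ∈ T'.splits)
    (hT : quartet T Q ≠ quartet T' Q) : B ∩ Q ≠ A ∩ Q ∧ B ∩ Q ≠ Aᶜ ∩ Q := by
  have hAc : (Aᶜ ∩ Q).card = 2 := by rw [card_compl_inter, hQ, hAQ]
  rw [quartet_eq_pair hQ hA hAQ] at hT
  constructor <;> intro h <;> apply hT
  · rw [quartet_eq_pair hQ hB (h ▸ hAQ), h, compl_inter_eq_of_inter_eq h]
  · rw [quartet_eq_pair hQ hB (h ▸ hAc), h, compl_inter_eq_of_inter_eq h, compl_compl,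
      Set.pair_comm]

end Quartet

section SitePattern

variable {ι α : Type*} [Fintype ι] [DecidableEq α]

def splitTrace (q : ι → α) (e : Finset α) : Finset ι := univ.filter (q · ∈ e)

@[simp]
lemma mem_splitTrace {q : ι → α} {e : Finset α} {k : ι} :
    k ∈ splitTrace q e ↔ q k ∈ e := by
  simp [splitTrace]

lemma splitTrace_compl [DecidableEq ι] [Fintype α] (q : ι → α) (e : Finset α) :
    splitTrace q eᶜ = (splitTrace q e)ᶜ := by
  ext; simp

lemma map_splitTrace (q : ι ↪ α) (e : Finset α) :
    (splitTrace q e).map q = e ∩ univ.map q := by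
  ext x
  simp only [mem_map, mem_splitTrace, mem_univ, true_and, mem_inter]
  constructor
  · rintro ⟨k, hk, rfl⟩; exact ⟨hk, k, rfl⟩
  · rintro ⟨hx, k, rfl⟩; exact ⟨k, hx, rfl⟩

lemma card_splitTrace (q : ι ↪ α) (e : Finset α) :
    (splitTrace q e).card = (e ∩ univ.map q).card := by
  rw [← map_splitTrace, card_map]

lemma splitTrace_eq_iff (q : ι ↪ α) {e e' : Finset α} :
    splitTrace q e = splitTrace q e' ↔ e ∩ univ.map q = e' ∩ univ.map q := by
  rw [← map_splitTrace, ← map_splitTrace, map_inj]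

def sitePattern {M : Type*} [AddCommMonoid M] (q : ι → α) (v : ι → M) : α → M :=
  fun i => ∑ k, if q k = i then v k else 0

variable {M : Type*} [AddCommMonoid M]

lemma sum_sitePattern (q : ι → α) (v : ι → M) (e : Finset α) :
    ∑ i ∈ e, sitePattern q v i = ∑ k ∈ splitTrace q e, v k := by
  simp only [sitePattern, splitTrace]
  rw [sum_comm, sum_filter]
  exact sum_congr rfl fun k _ => sum_ite_eq e (q k) fun _ => v k

lemma sum_univ_sitePattern [Fintype α] (q : ι → α) (v : ι → M) :
    ∑ i, sitePattern q v i = ∑ k, v k := by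
  rw [sum_sitePattern]; congr; ext; simp

end SitePattern

lemma exists_embedding_splitTrace_eq {n : ℕ} {A Q : Finset (Fin n)} (hQ : Q.card = 4)
    (hA : (A ∩ Q).card = 2) :
    ∃ q : Fin 4 ↪ Fin n, univ.map q = Q ∧ splitTrace q A = {0, 1} := by
  obtain ⟨a, b, hab, hAQ⟩ := card_eq_two.mp hA
  obtain ⟨c, d, hcd, hAcQ⟩ := card_eq_two.mp
    (show (Aᶜ ∩ Q).card = 2 by rw [card_compl_inter, hQ, hA])
  have hin : ∀ x, x ∈ A ∧ x ∈ Q ↔ x = a ∨ x = b := fun x => by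
    rw [← mem_inter, hAQ, mem_insert, mem_singleton]
  have hout : ∀ x, x ∉ A ∧ x ∈ Q ↔ x = c ∨ x = d := fun x => by
    rw [← mem_compl, ← mem_inter, hAcQ, mem_insert, mem_singleton]
  have ha := ((hin a).mpr (Or.inl rfl)).1
  have hb := ((hin b).mpr (Or.inr rfl)).1
  have hc := ((hout c).mpr (Or.inl rfl)).1
  have hd := ((hout d).mpr (Or.inr rfl)).1
  have hinj : Function.Injective ![a, b, c, d] := by
    intro i j hij
    fin_cases i <;> fin_cases j <;> simp_all
  refine ⟨⟨_, hinj⟩, ?_, ?_⟩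
  · ext x
    rw [show x ∈ Q ↔ (x ∈ A ∧ x ∈ Q) ∨ (x ∉ A ∧ x ∈ Q) by tauto, hin, hout]
    simp [Fin.exists_fin_succ, eq_comm, or_assoc]
  · ext k
    fin_cases k <;> simp [ha, hb, hc, hd]

section JukesCantor

variable {n : ℕ}

lemma psiJC_congr {T : PhyloBinaryTree n} (a : ↥(fullSplits T) → ℂ) {g h : Fin n → Gp}
    (hsum : ∑ i, g i = 0 ↔ ∑ i, h i = 0)
    (hsplit : ∀ e ∈ fullSplits T, (∑ i ∈ e, g i = 0 ↔ ∑ i ∈ e, h i = 0)) :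
    psiJC T a g = psiJC T a h :=
  if_congr hsum (prod_congr rfl fun e _ => if_congr (hsplit e e.2) rfl rfl) rfl

def zeroAtSplit (T : PhyloBinaryTree n) (A : Finset (Fin n)) : ↥(fullSplits T) → ℂ :=
  fun e => if (e : Finset (Fin n)) = A then 0 else 1

lemma psiJC_zeroAtSplit {T : PhyloBinaryTree n} {A : Finset (Fin n)} (hA : A ∈ fullSplits T)
    (g : Fin n → Gp) :
    psiJC T (zeroAtSplit T A) g =
      if ∑ i, g i = 0 ∧ ∑ i ∈ A, g i = 0 then 1 else 0 := by
  rw [psiJC, ite_and, prod_eq_single ⟨A, hA⟩]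
  · simp [zeroAtSplit]
  · intro e _ he
    have : (e : Finset (Fin n)) ≠ A := fun h => he (Subtype.ext h)
    simp [zeroAtSplit, this]
  · simp

def allTPattern : Fin 4 → Gp := fun _ => (1, 1)

/-- `G` at leaves `0` and `j`, `C` at the other two. Its sum over a set `t` of leaves vanishes
iff `t` meets both `{0, j}` and its complement in an even number of leaves, while that of
`allTPattern` vanishes iff `|t|` is even. -/
def cherryPattern (j : Fin 4) : Fin 4 → Gp := fun k => if k = 0 ∨ k = j then (1, 0) else (0, 1)

lemma sum_pattern_eq_zero_iff_of_pairing (S : Finset (Fin 4)) (hS : S.card = 2) (h01 : S ≠ {0, 1})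
    (h23 : S ≠ {0, 1}ᶜ) :
    (∀ t : Finset (Fin 4), (t.card = 2 → t = S ∨ t = Sᶜ) →
      (∑ k ∈ t, allTPattern k = 0 ↔ ∑ k ∈ t, cherryPattern 2 k = 0) ∧
      (∑ k ∈ t, cherryPattern 1 k = 0 ↔ ∑ k ∈ t, cherryPattern 3 k = 0)) ∨
    (∀ t : Finset (Fin 4), (t.card = 2 → t = S ∨ t = Sᶜ) →
      (∑ k ∈ t, allTPattern k = 0 ↔ ∑ k ∈ t, cherryPattern 3 k = 0) ∧
      (∑ k ∈ t, cherryPattern 1 k = 0 ↔ ∑ k ∈ t, cherryPattern 2 k = 0)) := by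
  revert S
  decide

open MvPolynomial in
noncomputable def jcInvariant (q : Fin 4 → Fin n) : MvPolynomial (Fin n → Gp) ℂ :=
  X (sitePattern q allTPattern) + X (sitePattern q (cherryPattern 1)) -
    X (sitePattern q (cherryPattern 2)) - X (sitePattern q (cherryPattern 3))

lemma eval_jcInvariant (q : Fin 4 → Fin n) (p : (Fin n → Gp) → ℂ) :
    MvPolynomial.eval p (jcInvariant q) =
      p (sitePattern q allTPattern) + p (sitePattern q (cherryPattern 1)) -
        p (sitePattern q (cherryPattern 2)) - p (sitePattern q (cherryPattern 3)) := by
  simp [jcInvariant]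

lemma eval_jcInvariant_psiJC_of_pairing {T : PhyloBinaryTree n} (a : ↥(fullSplits T) → ℂ)
    {q : Fin 4 → Fin n} {S : Finset (Fin 4)} (hS : S.card = 2) (h01 : S ≠ {0, 1})
    (h23 : S ≠ {0, 1}ᶜ)
    (hT : ∀ e ∈ fullSplits T, (splitTrace q e).card = 2 →
      splitTrace q e = S ∨ splitTrace q e = Sᶜ) :
    MvPolynomial.eval (psiJC T a) (jcInvariant q) = 0 := by
  have hpsi : ∀ v w : Fin 4 → Gp, ∑ k, v k = 0 → ∑ k, w k = 0 →
      (∀ t : Finset (Fin 4), (t.card = 2 → t = S ∨ t = Sᶜ) →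
        (∑ k ∈ t, v k = 0 ↔ ∑ k ∈ t, w k = 0)) →
      psiJC T a (sitePattern q v) = psiJC T a (sitePattern q w) := by
    intro v w hv hw hvw
    refine psiJC_congr a ?_ fun e he => ?_
    · simp only [sum_univ_sitePattern, hv, hw]
    · simp only [sum_sitePattern]; exact hvw _ (hT e he)
  rw [eval_jcInvariant]
  rcases sum_pattern_eq_zero_iff_of_pairing S hS h01 h23 with h | h
  · rw [hpsi _ (cherryPattern 2) (by decide) (by decide) fun t ht => (h t ht).1,
      hpsi (cherryPattern 1) (cherryPattern 3) (by decide) (by decide) fun t ht => (h t ht).2]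
    ring
  · rw [hpsi _ (cherryPattern 3) (by decide) (by decide) fun t ht => (h t ht).1,
      hpsi (cherryPattern 1) (cherryPattern 2) (by decide) (by decide) fun t ht => (h t ht).2]
    ring

lemma eval_jcInvariant_psiJC_zeroAtSplit {T : PhyloBinaryTree n} {A : Finset (Fin n)}
    (hA : A ∈ fullSplits T) {q : Fin 4 → Fin n} (hq : splitTrace q A = {0, 1}) :
    MvPolynomial.eval (psiJC T (zeroAtSplit T A)) (jcInvariant q) = 2 := by
  simp only [eval_jcInvariant, psiJC_zeroAtSplit hA, sum_univ_sitePattern]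
  simp only [sum_sitePattern, hq]
  rw [if_pos (by decide), if_pos (by decide), if_neg (by decide), if_neg (by decide)]
  norm_num

end JukesCantor

lemma eval_jcInvariant_psiJC_of_quartet_ne {n : ℕ} {T T' : PhyloBinaryTree n} {A : Finset (Fin n)}
    {q : Fin 4 ↪ Fin n} (hA : A ∈ T.splits) (hq : splitTrace q A = {0, 1})
    (hT : quartet T (univ.map q) ≠ quartet T' (univ.map q)) (a : ↥(fullSplits T') → ℂ) :
    MvPolynomial.eval (psiJC T' a) (jcInvariant q) = 0 := by
  have hQ : (univ.map q).card = 4 := by simp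
  have hAQ : (A ∩ univ.map q).card = 2 := by rw [← card_splitTrace, hq]; rfl
  obtain ⟨B, hB, hBQ⟩ := T'.exists_split_card_inter_eq_two hQ
  have hBA := inter_ne_of_quartet_ne hQ hA hAQ hB hT
  refine eval_jcInvariant_psiJC_of_pairing a (S := splitTrace q B) (by rwa [card_splitTrace])
    ?_ ?_ fun e he he2 => ?_
  · rw [← hq, Ne, splitTrace_eq_iff]; exact hBA.1
  · rw [← hq, ← splitTrace_compl, Ne, splitTrace_eq_iff]; exact hBA.2
  · rw [card_splitTrace] at he2
    rw [← splitTrace_compl, splitTrace_eq_iff, splitTrace_eq_iff]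
    exact (T'.compat B hB e (mem_splits_of_two_le_card_inter he he2.ge)).inter_eq_or_compl_inter_eq
      hQ hBQ he2

theorem jc_unmixed_not_in_mixture_general (n : ℕ) (T1 T2 T3 : PhyloBinaryTree n)
    (Q : Finset (Fin n)) (hQ : Q.card = 4)
    (h1 : quartet T3 Q ≠ quartet T1 Q) (h2 : quartet T3 Q ≠ quartet T2 Q) :
    ∃ (s : ↥(fullSplits T3) → ℂ) (f : MvPolynomial (Fin n → Gp) ℂ),
      (∀ (a : ↥(fullSplits T1) → ℂ) (b : ↥(fullSplits T2) → ℂ) (pi : ℂ),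
        MvPolynomial.eval (psiMixJC T1 T2 a b pi) f = 0) ∧
      MvPolynomial.eval (psiJC T3 s) f ≠ 0 := by
  obtain ⟨A, hA, hAQ⟩ := T3.exists_split_card_inter_eq_two hQ
  obtain ⟨q, rfl, hq⟩ := exists_embedding_splitTrace_eq hQ hAQ
  refine ⟨zeroAtSplit T3 A, jcInvariant q, fun a b pi => ?_, ?_⟩
  · have hT1 := eval_jcInvariant_psiJC_of_quartet_ne hA hq h1 a
    have hT2 := eval_jcInvariant_psiJC_of_quartet_ne hA hq h2 b
    rw [eval_jcInvariant] at hT1 hT2 ⊢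
    simp only [psiMixJC]
    linear_combination pi * hT1 + (1 - pi) * hT2
  · rw [eval_jcInvariant_psiJC_zeroAtSplit (mem_union_left _ hA) hq]
    exact two_ne_zero

/-- if on some 4-element subset `Q` of the taxa the induced quartet tree of
`T3` differs from those of `T1` and `T2`, then for the JC model the image of `ψ_{T3}` is
not contained in the Zariski closure of the image of the mixture `ψ_{T1,T2}`. -/
theorem jc_unmixed_not_in_mixture (n : ℕ) (hn : 4 ≤ n) (T1 T2 T3 : PhyloBinaryTree n)
    (Q : Finset (Fin n)) (hQ : Q.card = 4)
    (h1 : quartet T3 Q ≠ quartet T1 Q) (h2 : quartet T3 Q ≠ quartet T2 Q) :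
    ∃ (s : ↥(fullSplits T3) → ℂ) (f : MvPolynomial (Fin n → Gp) ℂ),
      (∀ (a : ↥(fullSplits T1) → ℂ) (b : ↥(fullSplits T2) → ℂ) (pi : ℂ),
        MvPolynomial.eval (psiMixJC T1 T2 a b pi) f = 0) ∧
      MvPolynomial.eval (psiJC T3 s) f ≠ 0 :=
  jc_unmixed_not_in_mixture_general n T1 T2 T3 Q hQ h1 h2
end

section
/- Let T1, T2, T3 be the binary trees on Fin 5 with nontrivial split sets Σ(T1) = {{1,2}, {1,2,3}}, Σ(T2) = {{1,3}, {1,3,4}}, Σ(T3) = {{1,2,3}, {1,3}}. Then for the Jukes–Cantor model, the image of ψ_{T3} is contained in the Zariski closure of the image of the mixture parameterization ψ_{T1,T2}: every polynomial that vanishes on the entire image of ψ_{T1,T2} also vanishes at ψ_{T3}(s) for every parameter choice s. (Equivalently, V_{T3} ⊆ V_{T1} ∗ V_{T2} for the JC model.) -/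
open scoped BigOperators

/-- `Σ(T1) = {12|345, 123|45}` (taxa `1,…,5` identified with `0,…,4 : Fin 5`). -/
def quinT1 : PhyloBinaryTree 5 :=
  ⟨{({0,1} : Finset (Fin 5)), {0,1,2}}, by decide, by decide, by decide, by decide⟩
/-- `Σ(T2) = {13|245, 134|25}`. -/
def quinT2 : PhyloBinaryTree 5 :=
  ⟨{({0,2} : Finset (Fin 5)), {0,2,3}}, by decide, by decide, by decide, by decide⟩
/-- `Σ(T3) = {123|45, 13|245}`. -/
def quinT3 : PhyloBinaryTree 5 :=
  ⟨{({0,1,2} : Finset (Fin 5)), {0,2}}, by decide, by decide, by decide, by decide⟩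

/-!
The coordinates of `ψ_{T₃}` are affine in the parameter `s` of the edge `123|45`, so
`ψ_{T₃}(s) = (1 - s) ψ_{T₃}(s := 0) + s ψ_{T₃}(s := 1)`. Setting it to `1` contracts the edge,
leaving the tree with the single split `13|245`, which is `T₂` with `134|25` contracted.
Setting it to `0` kills every coordinate whose `123`-sum is nonzero; on the others the sum over
`13` equals the value at taxon `2` (the group has exponent `2`), so the parameter of `13|245`
can be moved onto the leaf `2`, leaving the tree with the single split `123|45`, which is `T₁`
with `12|345` contracted. Hence `ψ_{T₃}(s)` even lies in the image of `ψ_{T₁,T₂}`.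
-/

open Function

def jcFactor (x : ℂ) (h : Gp) : ℂ := if h = 0 then 1 else x

/-- Parameters are indexed by all subsets of taxa, so that different trees can share them. -/
noncomputable def jcMonomial {n : ℕ} (S : Finset (Finset (Fin n))) (w : Finset (Fin n) → ℂ)
    (g : Fin n → Gp) : ℂ :=
  ∏ A ∈ S, jcFactor (w A) (∑ i ∈ A, g i)

section jcFactor

variable (h : Gp)

lemma jcFactor_one : jcFactor 1 h = 1 := by
  unfold jcFactor; split_ifs <;> rfl

lemma jcFactor_mul (x y : ℂ) : jcFactor x h * jcFactor y h = jcFactor (x * y) h := by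
  unfold jcFactor; split_ifs <;> simp

lemma jcFactor_eq_affine (x : ℂ) :
    jcFactor x h = (1 - x) * jcFactor 0 h + x * jcFactor 1 h := by
  unfold jcFactor; split_ifs <;> ring

end jcFactor

section jcMonomial

variable {n : ℕ} {S S' : Finset (Finset (Fin n))} {w : Finset (Fin n) → ℂ} {A : Finset (Fin n)}

lemma jcMonomial_update (hA : A ∈ S) (x : ℂ) (g : Fin n → Gp) :
    jcMonomial S (update w A x) g = jcFactor x (∑ i ∈ A, g i) * jcMonomial (S.erase A) w g := by
  rw [jcMonomial, ← Finset.mul_prod_erase S _ hA, update_self]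
  congr 1
  exact Finset.prod_congr rfl fun B hB => by rw [update_of_ne (Finset.ne_of_mem_erase hB)]

lemma jcMonomial_eq_mul (hA : A ∈ S) (g : Fin n → Gp) :
    jcMonomial S w g = jcFactor (w A) (∑ i ∈ A, g i) * jcMonomial (S.erase A) w g := by
  rw [← jcMonomial_update hA, update_eq_self]

lemma jcMonomial_eq_affine (hA : A ∈ S) (g : Fin n → Gp) :
    jcMonomial S w g =
      (1 - w A) * jcMonomial S (update w A 0) g + w A * jcMonomial S (update w A 1) g := by
  rw [jcMonomial_eq_mul hA, jcMonomial_update hA, jcMonomial_update hA, jcFactor_eq_affine]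
  ring

lemma jcMonomial_eq_of_eq_one (h : ∀ A ∈ S \ S', w A = 1) (h' : ∀ A ∈ S' \ S, w A = 1)
    (g : Fin n → Gp) : jcMonomial S w g = jcMonomial S' w g := by
  have hinter : ∀ {S S' : Finset (Finset (Fin n))}, (∀ A ∈ S \ S', w A = 1) →
      jcMonomial (S ∩ S') w g = jcMonomial S w g := fun h =>
    Finset.prod_subset Finset.inter_subset_left fun A hA hA' => by
      rw [h A (Finset.mem_sdiff.2 ⟨hA, fun hA'' => hA' (Finset.mem_inter.2 ⟨hA, hA''⟩)⟩),
        jcFactor_one]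
  rw [← hinter h, ← hinter h', Finset.inter_comm]

/-- If the split `B ∪ C` carries parameter `0`, only `g` with vanishing `(B ∪ C)`-sum
contribute, and for those the `B`-sum and the `C`-sum agree (`Gp` has characteristic `2`):
the parameter of `B` can be moved onto `C`. -/
lemma jcMonomial_eq_of_union_eq_zero {B C : Finset (Fin n)} (hB : B ∈ S) (hC : C ∈ S)
    (hBC : B ∪ C ∈ S) (hdisj : Disjoint B C) (hBne : B.Nonempty) (hCne : C.Nonempty)
    (hw : w (B ∪ C) = 0) (g : Fin n → Gp) :
    jcMonomial S w g = jcMonomial S (update (update w B 1) C (w B * w C)) g := by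
  have hne : B ≠ C := fun h => hBne.ne_empty (Finset.disjoint_self_iff_empty B |>.1 (h ▸ hdisj))
  have hneB : B ∪ C ≠ B := fun h => hCne.ne_empty <| Finset.disjoint_self_iff_empty C |>.1 <|
    Finset.disjoint_of_subset_left (Finset.union_eq_left.1 h) hdisj
  have hneC : B ∪ C ≠ C := fun h => hBne.ne_empty <| Finset.disjoint_self_iff_empty B |>.1 <|
    Finset.disjoint_of_subset_right (Finset.union_eq_right.1 h) hdisj
  have hB' : B ∈ S.erase C := Finset.mem_erase.2 ⟨hne, hB⟩
  have hBC' : B ∪ C ∈ (S.erase C).erase B :=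
    Finset.mem_erase.2 ⟨hneB, Finset.mem_erase.2 ⟨hneC, hBC⟩⟩
  rw [jcMonomial_update hC, jcMonomial_update hB', jcMonomial_eq_mul hC, jcMonomial_eq_mul hB',
    jcMonomial_eq_mul hBC', hw, Finset.sum_union hdisj]
  by_cases hsum : ∑ i ∈ B, g i + ∑ i ∈ C, g i = 0
  · rw [CharTwo.add_eq_zero.1 hsum, jcFactor_one, ← jcFactor_mul]
    ring
  · simp [jcFactor, hsum]

end jcMonomial

section psiJC

variable {n : ℕ} (T : PhyloBinaryTree n)

lemma psiJC_apply (w : Finset (Fin n) → ℂ) (g : Fin n → Gp) :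
    psiJC T (fun e => w e) g = if ∑ i, g i = 0 then jcMonomial (fullSplits T) w g else 0 :=
  if_congr Iff.rfl (Finset.prod_coe_sort (fullSplits T) fun A => jcFactor (w A) (∑ i ∈ A, g i)) rfl

lemma psiJC_eq_of_jcMonomial_eq (T' : PhyloBinaryTree n) {w w' : Finset (Fin n) → ℂ}
    (h : ∀ g, jcMonomial (fullSplits T) w g = jcMonomial (fullSplits T') w' g) :
    psiJC T (fun e => w e) = psiJC T' (fun e => w' e) := by
  ext g
  rw [psiJC_apply, psiJC_apply, h]

theorem psiJC_eq_psiMixJC {T₁ T₂ : PhyloBinaryTree n} {A : Finset (Fin n)}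
    (hA : A ∈ fullSplits T) {w : Finset (Fin n) → ℂ} {a : ↥(fullSplits T₁) → ℂ}
    {b : ↥(fullSplits T₂) → ℂ} (h₀ : psiJC T (fun e => update w A 0 e) = psiJC T₁ a)
    (h₁ : psiJC T (fun e => update w A 1 e) = psiJC T₂ b) :
    psiJC T (fun e => w e) = psiMixJC T₁ T₂ a b (1 - w A) := by
  ext g
  rw [psiMixJC, ← h₀, ← h₁, psiJC_apply, psiJC_apply, psiJC_apply, sub_sub_cancel]
  split_ifs
  · exact jcMonomial_eq_affine hA g
  · ring

end psiJC

noncomputable def extendByOne {n : ℕ} {S : Finset (Finset (Fin n))} (a : ↥S → ℂ)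
    (A : Finset (Fin n)) : ℂ :=
  if h : A ∈ S then a ⟨A, h⟩ else 1

lemma extendByOne_restrict {n : ℕ} {S : Finset (Finset (Fin n))} (a : ↥S → ℂ) :
    (fun e : ↥S => extendByOne a e) = a :=
  funext fun e => dif_pos e.2

lemma extendByOne_of_notMem {n : ℕ} {S : Finset (Finset (Fin n))} (a : ↥S → ℂ)
    {A : Finset (Fin n)} (hA : A ∉ S) : extendByOne a A = 1 :=
  dif_neg hA

lemma fullSplits_quinT3_sdiff_quinT1 : fullSplits quinT3 \ fullSplits quinT1 = {{0, 2}} := by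
  decide

lemma fullSplits_quinT1_sdiff_quinT3 : fullSplits quinT1 \ fullSplits quinT3 = {{0, 1}} := by
  decide

lemma fullSplits_quinT3_sdiff_quinT2 : fullSplits quinT3 \ fullSplits quinT2 = {{0, 1, 2}} := by
  decide

lemma fullSplits_quinT2_sdiff_quinT3 : fullSplits quinT2 \ fullSplits quinT3 = {{0, 2, 3}} := by
  decide

lemma psiJC_quinT3_eq_quinT2 {w : Finset (Fin 5) → ℂ} (hw : w {0, 2, 3} = 1) :
    psiJC quinT3 (fun e => update w {0, 1, 2} 1 e) =
      psiJC quinT2 (fun e => update w {0, 1, 2} 1 e) := by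
  refine psiJC_eq_of_jcMonomial_eq _ _ (jcMonomial_eq_of_eq_one ?_ ?_)
  · simp [fullSplits_quinT3_sdiff_quinT2]
  · simpa +decide [fullSplits_quinT2_sdiff_quinT3, update_apply]

lemma psiJC_quinT3_eq_quinT1 {w : Finset (Fin 5) → ℂ} (hw : w {0, 1} = 1) :
    psiJC quinT3 (fun e => update w {0, 1, 2} 0 e) =
      psiJC quinT1
        (fun e => update (update (update w {0, 1, 2} 0) {0, 2} 1) {1} (w {0, 2} * w {1}) e) := by
  refine psiJC_eq_of_jcMonomial_eq _ _ fun g => ?_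
  have hunion : ({0, 2} ∪ {1} : Finset (Fin 5)) = {0, 1, 2} := by decide
  rw [jcMonomial_eq_of_union_eq_zero (B := {0, 2}) (C := {1}) (by decide) (by decide) (by decide)
    (by decide) (by decide) (by decide) (by rw [hunion, update_self]) g]
  refine jcMonomial_eq_of_eq_one ?_ ?_ g
  · simp +decide [fullSplits_quinT3_sdiff_quinT1, update_apply]
  · simpa +decide [fullSplits_quinT1_sdiff_quinT3, update_apply]

/-- for the JC model, `V_{T3} ⊆ V_{T1} ∗ V_{T2}` for the three 5-taxon trees
above: every polynomial vanishing on the image of the mixture `ψ_{T1,T2}` vanishes on the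
image of `ψ_{T3}`. -/
theorem jc_five_taxa_containment :
    ∀ f : MvPolynomial (Fin 5 → Gp) ℂ,
      (∀ (a : ↥(fullSplits quinT1) → ℂ) (b : ↥(fullSplits quinT2) → ℂ) (pi : ℂ),
        MvPolynomial.eval (psiMixJC quinT1 quinT2 a b pi) f = 0) →
      ∀ s : ↥(fullSplits quinT3) → ℂ, MvPolynomial.eval (psiJC quinT3 s) f = 0 := by
  intro f hf s
  have hout : ∀ A ∉ fullSplits quinT3, extendByOne s A = 1 := fun A => extendByOne_of_notMem s
  rw [← extendByOne_restrict s, psiJC_eq_psiMixJC quinT3 (by decide)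
    (psiJC_quinT3_eq_quinT1 (hout _ (by decide))) (psiJC_quinT3_eq_quinT2 (hout _ (by decide)))]
  exact hf _ _ _
end
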